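/- arXiv:2603.14868 — 2 statements merged into one kernel-verified Lean document; each statement's English description precedes it below -/
import Mathlib

section
/- One-step covariance propagation under affine feedback (equation (18b) of the paper): Let (Ω, F, P) be a probability space, x : Ω → ℝⁿ and Δw : Ω → ℝ^d square-integrable random vectors such that Δw is independent of x, E[Δw] = 0, and E[Δw Δwᵀ] = Δτ I_d for some Δτ > 0. Let x̄ = E[x] and Σ = Cov(x). Given a deterministic vector ṽ ∈ ℝ^{m+1}, a matrix K̃ ∈ ℝ^{(m+1)×n}, matrices A ∈ ℝ^{n×n}, F ∈ ℝ^{n×(m+1)}, vector d ∈ ℝⁿ, and, for each i = 1, …, d, matrices Ã⁽ⁱ⁾ ∈ ℝ^{n×n}, F̃⁽ⁱ⁾ ∈ ℝ^{n×(m+1)}, vectors d̃⁽ⁱ⁾ ∈ ℝⁿ, set ũ := ṽ + K̃(x − x̄) and x₊ := A x + F ũ + d + Σ_{i=1}^{d} (Ã⁽ⁱ⁾ x + F̃⁽ⁱ⁾ ũ + d̃⁽ⁱ⁾) Δw⁽ⁱ⁾. Then Cov(x₊) = (A + F K̃) Σ (A + F K̃)ᵀ + Δτ · Σ_{i=1}^{d}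 ( (Ã⁽ⁱ⁾ + F̃⁽ⁱ⁾ K̃) Σ (Ã⁽ⁱ⁾ + F̃⁽ⁱ⁾ K̃)ᵀ + q⁽ⁱ⁾ (q⁽ⁱ⁾)ᵀ ), where q⁽ⁱ⁾ := Ã⁽ⁱ⁾ x̄ + F̃⁽ⁱ⁾ ṽ + d̃⁽ⁱ⁾. -/
/-!
Write `x̄ = E x`, `M = A + F K̃` and `Nᵢ = Ã⁽ⁱ⁾ + F̃⁽ⁱ⁾ K̃`. Substituting the feedback law gives
`x₊ = c + M (x - x̄) + ∑ᵢ Δwᵢ (qᵢ + Nᵢ (x - x̄))` with a deterministic `c`. Because `Δw` is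
independent of `x`, every expectation of a product of a function of `Δw` and a function of `x`
factors: `E[Δw] = 0` kills all terms linear in the noise and `E[Δw Δwᵀ] = Δτ I` keeps only the
diagonal quadratic ones. Hence `Cov(x₊) = M Σ Mᵀ + Δτ ∑ᵢ E[Sᵢ Sᵢᵀ]` with `Sᵢ = qᵢ + Nᵢ (x - x̄)`,
and `E[Sᵢ Sᵢᵀ] = qᵢ qᵢᵀ + Nᵢ Σ Nᵢᵀ` since `Sᵢ` has mean `qᵢ`.
-/

open MeasureTheory Matrix

/-- Componentwise expectation of a random vector. -/
noncomputable def meanVec {Ω : Type*} [MeasurableSpace Ω] (P : Measure Ω) {p : ℕ}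
    (z : Ω → Fin p → ℝ) : Fin p → ℝ :=
  fun i => ∫ ω, z ω i ∂P

/-- (Cross-)covariance matrix `E[(y − E y)(z − E z)ᵀ]` of two random vectors. -/
noncomputable def covMat {Ω : Type*} [MeasurableSpace Ω] (P : Measure Ω) {p q : ℕ}
    (y : Ω → Fin p → ℝ) (z : Ω → Fin q → ℝ) : Matrix (Fin p) (Fin q) ℝ :=
  Matrix.of fun i j => ∫ ω, (y ω i - meanVec P y i) * (z ω j - meanVec P z j) ∂P

open ProbabilityTheory
open scoped ENNReal

section RandomVector

variable {Ω : Type*} [MeasurableSpace Ω] {P : Measure Ω} {p q r s : ℕ}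

noncomputable def secondMoment (P : Measure Ω) (y : Ω → Fin p → ℝ) (z : Ω → Fin q → ℝ) :
    Matrix (Fin p) (Fin q) ℝ :=
  Matrix.of fun i j => ∫ ω, y ω i * z ω j ∂P

lemma covMat_apply (y : Ω → Fin p → ℝ) (z : Ω → Fin q → ℝ) (i : Fin p) (j : Fin q) :
    covMat P y z i j = cov[fun ω => y ω i, fun ω => z ω j; P] :=
  rfl

lemma MeasureTheory.MemLp.const_add_mulVec_sub [IsFiniteMeasure P] {x : Ω → Fin q → ℝ}
    {t : ℝ≥0∞} (hx : MemLp x t P) (c : Fin p → ℝ) (M : Matrix (Fin p) (Fin q) ℝ)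
    (b : Fin q → ℝ) :
    MemLp (fun ω => c + M *ᵥ (x ω - b)) t P :=
  (memLp_const c).add <|
    (LinearMap.toContinuousLinearMap M.mulVecLin).comp_memLp' (hx.sub (memLp_const b))

variable [IsProbabilityMeasure P]

lemma secondMoment_eq_vecMulVec_add_covMat {y : Ω → Fin p → ℝ} {z : Ω → Fin q → ℝ}
    (hy : MemLp y 2 P) (hz : MemLp z 2 P) :
    secondMoment P y z = vecMulVec (meanVec P y) (meanVec P z) + covMat P y z := by
  ext i j
  rw [Matrix.add_apply, covMat_apply, covariance_eq_sub (hy.eval i) (hz.eval j)]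
  simp [secondMoment, vecMulVec_apply, meanVec]

lemma meanVec_const_add_mulVec_sub {x : Ω → Fin q → ℝ} (hx : Integrable x P)
    (c : Fin p → ℝ) (M : Matrix (Fin p) (Fin q) ℝ) (b : Fin q → ℝ) :
    meanVec P (fun ω => c + M *ᵥ (x ω - b)) = c + M *ᵥ (meanVec P x - b) := by
  ext a
  have hterm : ∀ e, Integrable (fun ω => M a e * (x ω e - b e)) P := fun e =>
    ((hx.eval e).sub (integrable_const (b e))).const_mul _
  simp only [meanVec, Pi.add_apply, mulVec, dotProduct, Pi.sub_apply]
  rw [integral_add (integrable_const _) (integrable_finsetSum _ fun e _ => hterm e),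
    integral_finsetSum _ fun e _ => hterm e]
  simp [integral_const_mul, integral_sub (hx.eval _) (integrable_const _)]

lemma covMat_const_add_mulVec_sub {x : Ω → Fin q → ℝ} {z : Ω → Fin s → ℝ}
    (hx : MemLp x 2 P) (hz : MemLp z 2 P)
    (c : Fin p → ℝ) (M : Matrix (Fin p) (Fin q) ℝ) (b : Fin q → ℝ)
    (c' : Fin r → ℝ) (N : Matrix (Fin r) (Fin s) ℝ) (b' : Fin s → ℝ) :
    covMat P (fun ω => c + M *ᵥ (x ω - b)) (fun ω => c' + N *ᵥ (z ω - b')) =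
      M * covMat P x z * Nᵀ := by
  ext a a'
  have hterm : ∀ {t : ℕ} {y : Ω → Fin t → ℝ}, MemLp y 2 P → ∀ (m β : Fin t → ℝ) e,
      MemLp (fun ω => m e * (y ω e - β e)) 2 P := fun hy m β e =>
    ((hy.eval e).sub (memLp_const (β e))).const_mul (m e)
  have hsum : ∀ {t : ℕ} {y : Ω → Fin t → ℝ}, MemLp y 2 P → ∀ (m β : Fin t → ℝ),
      Integrable (fun ω => ∑ e, m e * (y ω e - β e)) P := fun hy m β =>
    (memLp_finsetSum _ fun e _ => hterm hy m β e).integrable one_le_two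
  simp only [covMat_apply, Pi.add_apply, mulVec, dotProduct, Pi.sub_apply]
  rw [covariance_const_add_left (hsum hx (M a) b), covariance_const_add_right (hsum hz (N a') b'),
    covariance_fun_sum_fun_sum (hterm hx (M a) b) (hterm hz (N a') b')]
  simp only [covariance_const_mul_left, covariance_const_mul_right,
    covariance_sub_const_left ((hx.eval _).integrable one_le_two),
    covariance_sub_const_right ((hz.eval _).integrable one_le_two),
    mul_apply, transpose_apply, Finset.sum_mul, covMat_apply]
  rw [Finset.sum_comm]
  exact Finset.sum_congr rfl fun e _ => Finset.sum_congr rfl fun f _ => by ring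

end RandomVector

section WhiteNoise

variable {Ω E : Type*} [MeasurableSpace Ω] [MeasurableSpace E] {P : Measure Ω} {d : ℕ}

structure IsWhiteNoise (P : Measure Ω) (w : Ω → Fin d → ℝ) (Δτ : ℝ) : Prop where
  memLp : MemLp w 2 P
  meanVec_eq_zero : meanVec P w = 0
  secondMoment_eq : secondMoment P w w = Δτ • 1

namespace IsWhiteNoise

variable {w : Ω → Fin d → ℝ} {Δτ : ℝ} {x : Ω → E}

lemma integral_mul_comp (hw : IsWhiteNoise P w Δτ) (hindep : IndepFun w x P)
    (hx : AEMeasurable x P) {f : E → ℝ} (hf : Measurable f) (i : Fin d) :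
    ∫ ω, w ω i * f (x ω) ∂P = 0 := by
  have hmean : ∫ ω, w ω i ∂P = 0 := congrFun hw.meanVec_eq_zero i
  rw [hindep.integral_fun_comp_mul_comp hw.memLp.aemeasurable hx
    (measurable_pi_apply i).aestronglyMeasurable hf.aestronglyMeasurable]
  simp [hmean]

lemma integral_mul_mul_comp (hw : IsWhiteNoise P w Δτ) (hindep : IndepFun w x P)
    (hx : AEMeasurable x P) {f : E → ℝ} (hf : Measurable f) (i j : Fin d) :
    ∫ ω, w ω i * w ω j * f (x ω) ∂P = if i = j then Δτ * ∫ ω, f (x ω) ∂P else 0 := by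
  have hij : ∫ ω, w ω i * w ω j ∂P = if i = j then Δτ else 0 := by
    simpa [secondMoment, one_apply] using congrFun (congrFun hw.secondMoment_eq i) j
  rw [hindep.integral_fun_comp_mul_comp (f := fun v => v i * v j) hw.memLp.aemeasurable hx
    (by fun_prop) hf.aestronglyMeasurable, hij]
  split_ifs <;> simp

lemma integrable_mul_mul_comp (hw : IsWhiteNoise P w Δτ) (hindep : IndepFun w x P)
    {f : E → ℝ} (hf : Measurable f) (hfx : Integrable (fun ω => f (x ω)) P) (i j : Fin d) :
    Integrable (fun ω => w ω i * w ω j * f (x ω)) P :=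
  (hindep.comp (φ := fun v : Fin d → ℝ => v i * v j) (by fun_prop) hf).integrable_mul
    (by exact (hw.memLp.eval i).integrable_mul (hw.memLp.eval j)) hfx

lemma integral_sum_sum_mul_mul_comp (hw : IsWhiteNoise P w Δτ) (hindep : IndepFun w x P)
    (hx : AEMeasurable x P) {F G : Fin d → E → ℝ} (hF : ∀ i, Measurable (F i))
    (hG : ∀ i, Measurable (G i)) (hFx : ∀ i, MemLp (fun ω => F i (x ω)) 2 P)
    (hGx : ∀ i, MemLp (fun ω => G i (x ω)) 2 P) :
    ∫ ω, ∑ i, ∑ j, w ω i * w ω j * (F i (x ω) * G j (x ω)) ∂P =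
      Δτ * ∑ i, ∫ ω, F i (x ω) * G i (x ω) ∂P := by
  have hint : ∀ i j, Integrable (fun ω => w ω i * w ω j * (F i (x ω) * G j (x ω))) P :=
    fun i j => hw.integrable_mul_mul_comp hindep ((hF i).mul (hG j))
      ((hFx i).integrable_mul (hGx j)) i j
  rw [integral_finsetSum _ fun i _ => integrable_finsetSum _ fun j _ => hint i j, Finset.mul_sum]
  refine Finset.sum_congr rfl fun i _ => ?_
  rw [integral_finsetSum _ fun j _ => hint i j]
  simp_rw [fun j => hw.integral_mul_mul_comp hindep hx (f := fun z => F i z * G j z)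
    ((hF i).mul (hG j)) i j]
  simp

variable [IsFiniteMeasure P]

lemma integrable_mul_comp (hw : IsWhiteNoise P w Δτ) (hindep : IndepFun w x P)
    {f : E → ℝ} (hf : Measurable f) (hfx : Integrable (fun ω => f (x ω)) P) (i : Fin d) :
    Integrable (fun ω => w ω i * f (x ω)) P :=
  (hindep.comp (measurable_pi_apply i) hf).integrable_mul
    ((hw.memLp.eval i).integrable one_le_two) hfx

lemma integral_add_sum_mul_comp (hw : IsWhiteNoise P w Δτ) (hindep : IndepFun w x P)
    (hx : AEMeasurable x P) {g : Ω → ℝ} (hg : Integrable g P) {F : Fin d → E → ℝ}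
    (hF : ∀ i, Measurable (F i)) (hFx : ∀ i, Integrable (fun ω => F i (x ω)) P) :
    ∫ ω, (g ω + ∑ i, w ω i * F i (x ω)) ∂P = ∫ ω, g ω ∂P := by
  have hint : ∀ i, Integrable (fun ω => w ω i * F i (x ω)) P :=
    fun i => hw.integrable_mul_comp hindep (hF i) (hFx i) i
  rw [integral_add hg (integrable_finsetSum _ fun i _ => hint i),
    integral_finsetSum _ fun i _ => hint i]
  simp [hw.integral_mul_comp hindep hx (hF _)]

lemma integral_add_sum_mul_comp_mul_add_sum_mul_comp (hw : IsWhiteNoise P w Δτ)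
    (hindep : IndepFun w x P) (hx : AEMeasurable x P) {f g : E → ℝ} {F G : Fin d → E → ℝ}
    (hf : Measurable f) (hg : Measurable g) (hF : ∀ i, Measurable (F i))
    (hG : ∀ i, Measurable (G i)) (hfx : MemLp (fun ω => f (x ω)) 2 P)
    (hgx : MemLp (fun ω => g (x ω)) 2 P) (hFx : ∀ i, MemLp (fun ω => F i (x ω)) 2 P)
    (hGx : ∀ i, MemLp (fun ω => G i (x ω)) 2 P) :
    ∫ ω, (f (x ω) + ∑ i, w ω i * F i (x ω)) * (g (x ω) + ∑ i, w ω i * G i (x ω)) ∂P =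
      ∫ ω, f (x ω) * g (x ω) ∂P + Δτ * ∑ i, ∫ ω, F i (x ω) * G i (x ω) ∂P := by
  have expand : ∀ ω,
      (f (x ω) + ∑ i, w ω i * F i (x ω)) * (g (x ω) + ∑ i, w ω i * G i (x ω)) =
        (f (x ω) * g (x ω) + ∑ i, w ω i * (f (x ω) * G i (x ω) + F i (x ω) * g (x ω))) +
          ∑ i, ∑ j, w ω i * w ω j * (F i (x ω) * G j (x ω)) := by
    intro ω
    have hfG : ∀ i, f (x ω) * (w ω i * G i (x ω)) = w ω i * (f (x ω) * G i (x ω)) :=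
      fun i => by ring
    have hFg : ∀ i, w ω i * F i (x ω) * g (x ω) = w ω i * (F i (x ω) * g (x ω)) :=
      fun i => by ring
    have hFG : ∀ i j, w ω i * F i (x ω) * (w ω j * G j (x ω)) =
        w ω i * w ω j * (F i (x ω) * G j (x ω)) := fun i j => by ring
    rw [add_mul, mul_add, mul_add, Finset.sum_mul_sum, Finset.mul_sum, Finset.sum_mul]
    simp only [hfG, hFg, hFG, mul_add, Finset.sum_add_distrib]
    ring
  have hfg : Integrable (fun ω => f (x ω) * g (x ω)) P := hfx.integrable_mul hgx
  have hcrossF : ∀ i, Measurable fun z => f z * G i z + F i z * g z :=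
    fun i => (hf.mul (hG i)).add ((hF i).mul hg)
  have hcross : ∀ i, Integrable (fun ω => f (x ω) * G i (x ω) + F i (x ω) * g (x ω)) P :=
    fun i => (hfx.integrable_mul (hGx i)).add ((hFx i).integrable_mul hgx)
  have hlinear : Integrable (fun ω => f (x ω) * g (x ω) +
      ∑ i, w ω i * (f (x ω) * G i (x ω) + F i (x ω) * g (x ω))) P :=
    hfg.fun_add <| integrable_finsetSum _ fun i _ =>
      hw.integrable_mul_comp hindep (hcrossF i) (hcross i) i
  have hquadratic : Integrable
      (fun ω => ∑ i, ∑ j, w ω i * w ω j * (F i (x ω) * G j (x ω))) P :=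
    integrable_finsetSum _ fun i _ => integrable_finsetSum _ fun j _ =>
      hw.integrable_mul_mul_comp hindep ((hF i).mul (hG j)) ((hFx i).integrable_mul (hGx j)) i j
  simp_rw [expand]
  rw [integral_add hlinear hquadratic,
    hw.integral_add_sum_mul_comp hindep hx hfg (F := fun i z => f z * G i z + F i z * g z)
      hcrossF hcross,
    hw.integral_sum_sum_mul_mul_comp hindep hx hF hG hFx hGx]

lemma covariance_add_sum_mul_comp (hw : IsWhiteNoise P w Δτ)
    (hindep : IndepFun w x P) (hx : AEMeasurable x P) {f g : E → ℝ} {F G : Fin d → E → ℝ}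
    (hf : Measurable f) (hg : Measurable g) (hF : ∀ i, Measurable (F i))
    (hG : ∀ i, Measurable (G i)) (hfx : MemLp (fun ω => f (x ω)) 2 P)
    (hgx : MemLp (fun ω => g (x ω)) 2 P) (hFx : ∀ i, MemLp (fun ω => F i (x ω)) 2 P)
    (hGx : ∀ i, MemLp (fun ω => G i (x ω)) 2 P) :
    cov[fun ω => f (x ω) + ∑ i, w ω i * F i (x ω),
        fun ω => g (x ω) + ∑ i, w ω i * G i (x ω); P] =
      cov[fun ω => f (x ω), fun ω => g (x ω); P] +
        Δτ * ∑ i, ∫ ω, F i (x ω) * G i (x ω) ∂P := by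
  have hmeanf := hw.integral_add_sum_mul_comp hindep hx (hfx.integrable one_le_two) hF
    fun i => (hFx i).integrable one_le_two
  have hmeang := hw.integral_add_sum_mul_comp hindep hx (hgx.integrable one_le_two) hG
    fun i => (hGx i).integrable one_le_two
  have hcentered := hw.integral_add_sum_mul_comp_mul_add_sum_mul_comp hindep hx
    (f := fun z => f z - ∫ ω, f (x ω) ∂P) (g := fun z => g z - ∫ ω, g (x ω) ∂P)
    (hf.sub measurable_const) (hg.sub measurable_const) hF hG
    (hfx.sub (memLp_const _)) (hgx.sub (memLp_const _)) hFx hGx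
  simp only [covariance, hmeanf, hmeang]
  rw [← hcentered]
  congr with ω
  ring

theorem covMat_add_sum_smul (hw : IsWhiteNoise P w Δτ) (hindep : IndepFun w x P)
    (hx : AEMeasurable x P) {p : ℕ} {T : E → Fin p → ℝ} {S : Fin d → E → Fin p → ℝ}
    (hT : Measurable T) (hS : ∀ i, Measurable (S i)) (hTx : MemLp (fun ω => T (x ω)) 2 P)
    (hSx : ∀ i, MemLp (fun ω => S i (x ω)) 2 P) :
    covMat P (fun ω => T (x ω) + ∑ i, w ω i • S i (x ω))
        (fun ω => T (x ω) + ∑ i, w ω i • S i (x ω)) =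
      covMat P (fun ω => T (x ω)) (fun ω => T (x ω)) +
        Δτ • ∑ i, secondMoment P (fun ω => S i (x ω)) (fun ω => S i (x ω)) := by
  ext a b
  simp only [covMat_apply, Matrix.add_apply, Matrix.smul_apply, Matrix.sum_apply, secondMoment,
    of_apply, Pi.add_apply, Finset.sum_apply, Pi.smul_apply, smul_eq_mul]
  exact hw.covariance_add_sum_mul_comp hindep hx (f := fun z => T z a) (g := fun z => T z b)
    (F := fun i z => S i z a) (G := fun i z => S i z b) (by fun_prop) (by fun_prop)
    (fun i => by fun_prop) (fun i => by fun_prop) (hTx.eval a) (hTx.eval b)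
    (fun i => (hSx i).eval a) (fun i => (hSx i).eval b)

end IsWhiteNoise

end WhiteNoise

lemma mulVec_add_mulVec_feedback {ι κ μ R : Type*} [Fintype κ] [Fintype μ] [CommRing R]
    (B : Matrix ι κ R) (G : Matrix ι μ R) (K : Matrix μ κ R) (e : ι → R) (v : μ → R)
    (b z : κ → R) :
    B *ᵥ z + G *ᵥ (v + K *ᵥ (z - b)) + e =
      (B *ᵥ b + G *ᵥ v + e) + (B + G * K) *ᵥ (z - b) := by
  rw [mulVec_add, add_mulVec, ← mulVec_mulVec, mulVec_sub B z b]
  abel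

theorem one_step_covariance_affine_feedback_general
    {Ω : Type*} [MeasurableSpace Ω] (P : Measure Ω) [IsProbabilityMeasure P]
    {n m d : ℕ}
    (x : Ω → Fin n → ℝ) (Δw : Ω → Fin d → ℝ)
    (hx : MemLp x 2 P) (hw : MemLp Δw 2 P)
    (hindep : ProbabilityTheory.IndepFun Δw x P)
    (hw0 : ∀ i, ∫ ω, Δw ω i ∂P = 0)
    (Δτ : ℝ)
    (hw2 : (Matrix.of fun i j => ∫ ω, Δw ω i * Δw ω j ∂P) =
      Δτ • (1 : Matrix (Fin d) (Fin d) ℝ))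
    (v : Fin (m + 1) → ℝ) (K : Matrix (Fin (m + 1)) (Fin n) ℝ)
    (A : Matrix (Fin n) (Fin n) ℝ) (F : Matrix (Fin n) (Fin (m + 1)) ℝ)
    (dv : Fin n → ℝ)
    (At : Fin d → Matrix (Fin n) (Fin n) ℝ)
    (Ft : Fin d → Matrix (Fin n) (Fin (m + 1)) ℝ)
    (dt : Fin d → Fin n → ℝ)
    (u : Ω → Fin (m + 1) → ℝ)
    (hu : ∀ ω, u ω = v + K.mulVec (x ω - meanVec P x))
    (xp : Ω → Fin n → ℝ)
    (hxp : ∀ ω, xp ω =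
      A.mulVec (x ω) + F.mulVec (u ω) + dv +
        ∑ i : Fin d, Δw ω i • ((At i).mulVec (x ω) + (Ft i).mulVec (u ω) + dt i)) :
    covMat P xp xp =
      (A + F * K) * covMat P x x * (A + F * K)ᵀ +
        Δτ • ∑ i : Fin d,
          ((At i + Ft i * K) * covMat P x x * (At i + Ft i * K)ᵀ +
            Matrix.vecMulVec
              ((At i).mulVec (meanVec P x) + (Ft i).mulVec v + dt i)
              ((At i).mulVec (meanVec P x) + (Ft i).mulVec v + dt i)) := by
  have hnoise : IsWhiteNoise P Δw Δτ := ⟨hw, funext hw0, hw2⟩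
  have hxp' : xp = fun ω =>
      (A *ᵥ meanVec P x + F *ᵥ v + dv + (A + F * K) *ᵥ (x ω - meanVec P x)) +
        ∑ i, Δw ω i • ((At i *ᵥ meanVec P x + Ft i *ᵥ v + dt i) +
          (At i + Ft i * K) *ᵥ (x ω - meanVec P x)) := by
    funext ω
    simp only [hxp, hu, mulVec_add_mulVec_feedback]
  rw [hxp', hnoise.covMat_add_sum_smul hindep hx.aemeasurable
      (T := fun z => A *ᵥ meanVec P x + F *ᵥ v + dv + (A + F * K) *ᵥ (z - meanVec P x))
      (S := fun i z => (At i *ᵥ meanVec P x + Ft i *ᵥ v + dt i) +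
        (At i + Ft i * K) *ᵥ (z - meanVec P x))
      (by fun_prop) (fun i => by fun_prop) (hx.const_add_mulVec_sub _ _ _)
      (fun i => hx.const_add_mulVec_sub _ _ _),
    covMat_const_add_mulVec_sub hx hx]
  simp_rw [secondMoment_eq_vecMulVec_add_covMat (hx.const_add_mulVec_sub _ _ _)
      (hx.const_add_mulVec_sub _ _ _),
    meanVec_const_add_mulVec_sub (hx.integrable one_le_two), covMat_const_add_mulVec_sub hx hx,
    sub_self, mulVec_zero, add_zero, add_comm (vecMulVec _ _)]

/-- **One-step covariance propagation under affine feedback** (equation (18b)).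
With `ũ = ṽ + K̃ (x − x̄)` and
`x₊ = A x + F ũ + d + ∑ i (Ã⁽ⁱ⁾ x + F̃⁽ⁱ⁾ ũ + d̃⁽ⁱ⁾) Δw⁽ⁱ⁾`, where `Δw` is
independent of `x`, `E[Δw] = 0`, and `E[Δw Δwᵀ] = Δτ I`, the covariance of `x₊`
is `(A + F K̃) Σ (A + F K̃)ᵀ + Δτ ∑ i ((Ã⁽ⁱ⁾ + F̃⁽ⁱ⁾ K̃) Σ (Ã⁽ⁱ⁾ + F̃⁽ⁱ⁾ K̃)ᵀ + q⁽ⁱ⁾ q⁽ⁱ⁾ᵀ)`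
with `q⁽ⁱ⁾ = Ã⁽ⁱ⁾ x̄ + F̃⁽ⁱ⁾ ṽ + d̃⁽ⁱ⁾`. -/
theorem one_step_covariance_affine_feedback
    {Ω : Type*} [MeasurableSpace Ω] (P : Measure Ω) [IsProbabilityMeasure P]
    {n m d : ℕ}
    (x : Ω → Fin n → ℝ) (Δw : Ω → Fin d → ℝ)
    (hx : MemLp x 2 P) (hw : MemLp Δw 2 P)
    (hindep : ProbabilityTheory.IndepFun Δw x P)
    (hw0 : ∀ i, ∫ ω, Δw ω i ∂P = 0)
    (Δτ : ℝ) (hΔτ : 0 < Δτ)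
    (hw2 : (Matrix.of fun i j => ∫ ω, Δw ω i * Δw ω j ∂P) =
      Δτ • (1 : Matrix (Fin d) (Fin d) ℝ))
    (v : Fin (m + 1) → ℝ) (K : Matrix (Fin (m + 1)) (Fin n) ℝ)
    (A : Matrix (Fin n) (Fin n) ℝ) (F : Matrix (Fin n) (Fin (m + 1)) ℝ)
    (dv : Fin n → ℝ)
    (At : Fin d → Matrix (Fin n) (Fin n) ℝ)
    (Ft : Fin d → Matrix (Fin n) (Fin (m + 1)) ℝ)
    (dt : Fin d → Fin n → ℝ)
    (u : Ω → Fin (m + 1) → ℝ)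
    (hu : ∀ ω, u ω = v + K.mulVec (x ω - meanVec P x))
    (xp : Ω → Fin n → ℝ)
    (hxp : ∀ ω, xp ω =
      A.mulVec (x ω) + F.mulVec (u ω) + dv +
        ∑ i : Fin d, Δw ω i • ((At i).mulVec (x ω) + (Ft i).mulVec (u ω) + dt i)) :
    covMat P xp xp =
      (A + F * K) * covMat P x x * (A + F * K)ᵀ +
        Δτ • ∑ i : Fin d,
          ((At i + Ft i * K) * covMat P x x * (At i + Ft i * K)ᵀ +
            Matrix.vecMulVec
              ((At i).mulVec (meanVec P x) + (Ft i).mulVec v + dt i)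
              ((At i).mulVec (meanVec P x) + (Ft i).mulVec v + dt i)) :=
  one_step_covariance_affine_feedback_general P x Δw hx hw hindep hw0 Δτ hw2 v K A F dv At Ft dt u
    hu xp hxp
end

section
/- Lipschitz variance bound (Lemma 3): Let h > 0 and let ψ : [0, h] → ℝᵖ be Lipschitz continuous with constant L, i.e., ‖ψ(t) − ψ(s)‖ ≤ L|t − s| for all t, s ∈ [0, h]. Define ψ̄ := (1/h) ∫_0^h ψ(t) dt. Then ∫_0^h ‖ψ(t) − ψ̄‖² dt ≤ (L²/12) h³. -/
/-!
The average `ψ̄` minimises `c ↦ ∫ ‖ψ t - c‖²` over constants `c`: the cross term of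
`‖ψ - c‖² = ‖ψ - ψ̄‖² + 2⟪ψ̄ - c, ψ - ψ̄⟫ + ‖ψ̄ - c‖²` integrates to zero. Comparing with the
value `c = ψ (h / 2)` at the midpoint, the Lipschitz bound gives
`∫ ‖ψ t - ψ (h / 2)‖² ≤ L² ∫ (t - h / 2)² = L² h³ / 12`.
-/

open MeasureTheory

section

variable {E : Type*} [NormedAddCommGroup E] [InnerProductSpace ℝ E] [CompleteSpace E]

theorem integral_norm_sub_sq_eq_add {a b : ℝ} (hab : a ≠ b) {f : ℝ → E}
    (hf : ContinuousOn f (Set.uIcc a b)) (c : E) :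
    ∫ t in a..b, ‖f t - c‖ ^ 2 =
      (∫ t in a..b, ‖f t - (b - a)⁻¹ • ∫ s in a..b, f s‖ ^ 2) +
        (b - a) * ‖(b - a)⁻¹ • (∫ s in a..b, f s) - c‖ ^ 2 := by
  set m := (b - a)⁻¹ • ∫ s in a..b, f s with hm
  have hfm : ContinuousOn (fun t => f t - m) (Set.uIcc a b) := hf.sub continuousOn_const
  have hcross : ∫ t in a..b, inner ℝ (m - c) (f t - m) = 0 := by
    have hsum : ∫ t in a..b, (f t - m) = 0 := by
      rw [intervalIntegral.integral_sub hf.intervalIntegrable intervalIntegrable_const,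
        intervalIntegral.integral_const, hm, smul_smul,
        mul_inv_cancel₀ (sub_ne_zero.2 hab.symm), one_smul, sub_self]
    have := (innerSL ℝ (m - c)).intervalIntegral_comp_comm (hfm.intervalIntegrable (μ := volume))
    simp only [innerSL_apply_apply] at this
    rw [this, hsum, inner_zero_right]
  have hexpand : ∀ t, ‖f t - c‖ ^ 2 =
      ‖f t - m‖ ^ 2 + 2 * inner ℝ (m - c) (f t - m) + ‖m - c‖ ^ 2 := by
    intro t
    rw [← sub_add_sub_cancel (f t) m c, norm_add_sq_real, real_inner_comm]
  have hsq : IntervalIntegrable (fun t => ‖f t - m‖ ^ 2) volume a b :=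
    (hfm.norm.pow 2).intervalIntegrable
  have hin : IntervalIntegrable (fun t => inner ℝ (m - c) (f t - m)) volume a b :=
    ((innerSL ℝ (m - c)).continuous.comp_continuousOn hfm).intervalIntegrable
  simp_rw [hexpand]
  rw [intervalIntegral.integral_add (hsq.add (hin.const_mul 2)) intervalIntegrable_const,
    intervalIntegral.integral_add hsq (hin.const_mul 2), intervalIntegral.integral_const_mul,
    hcross, intervalIntegral.integral_const, smul_eq_mul]
  ring

theorem integral_norm_sub_average_sq_le {a b : ℝ} (hab : a ≤ b) {f : ℝ → E}
    (hf : ContinuousOn f (Set.uIcc a b)) (c : E) :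
    ∫ t in a..b, ‖f t - (b - a)⁻¹ • ∫ s in a..b, f s‖ ^ 2 ≤ ∫ t in a..b, ‖f t - c‖ ^ 2 := by
  rcases hab.eq_or_lt with rfl | hlt
  · simp
  rw [integral_norm_sub_sq_eq_add hlt.ne hf c]
  have : 0 ≤ b - a := sub_nonneg.2 hab
  linarith [mul_nonneg this (sq_nonneg ‖(b - a)⁻¹ • (∫ s in a..b, f s) - c‖)]

end

theorem integral_sub_midpoint_sq (a b : ℝ) :
    ∫ t in a..b, (t - (a + b) / 2) ^ 2 = (b - a) ^ 3 / 12 := by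
  rw [intervalIntegral.integral_comp_sub_right (fun t => t ^ 2), integral_pow]
  ring

theorem LipschitzOnWith.integral_norm_sub_midpoint_sq_le {E : Type*} [NormedAddCommGroup E]
    {a b : ℝ} (hab : a ≤ b) {K : NNReal} {f : ℝ → E} (hf : LipschitzOnWith K f (Set.Icc a b)) :
    ∫ t in a..b, ‖f t - f ((a + b) / 2)‖ ^ 2 ≤ K ^ 2 * ((b - a) ^ 3 / 12) := by
  have hmid : (a + b) / 2 ∈ Set.Icc a b := ⟨by linarith, by linarith⟩
  have hcont : ContinuousOn f (Set.uIcc a b) := by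
    rw [Set.uIcc_of_le hab]; exact hf.continuousOn
  rw [← integral_sub_midpoint_sq, ← intervalIntegral.integral_const_mul]
  refine intervalIntegral.integral_mono_on hab
    ((hcont.sub continuousOn_const).norm.pow 2).intervalIntegrable
    ((by fun_prop : Continuous _).intervalIntegrable _ _) fun t ht => ?_
  calc ‖f t - f ((a + b) / 2)‖ ^ 2 ≤ (K * |t - (a + b) / 2|) ^ 2 := by
        gcongr
        simpa [← dist_eq_norm, ← Real.dist_eq] using hf.dist_le_mul t ht _ hmid
    _ = K ^ 2 * (t - (a + b) / 2) ^ 2 := by rw [mul_pow, sq_abs]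

/-- **Lipschitz variance bound** (Lemma 3). If `ψ : [0,h] → ℝᵖ` is Lipschitz with
constant `L` and `ψ̄` is its average, then `∫_0^h ‖ψ(t) − ψ̄‖² dt ≤ (L²/12) h³`. -/
theorem lipschitz_variance_bound
    {p : ℕ} (h L : ℝ) (hh : 0 < h)
    (ψ : ℝ → EuclideanSpace ℝ (Fin p))
    (hlip : ∀ t ∈ Set.Icc (0 : ℝ) h, ∀ s ∈ Set.Icc (0 : ℝ) h,
      ‖ψ t - ψ s‖ ≤ L * |t - s|)
    (ψbar : EuclideanSpace ℝ (Fin p))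
    (hψbar : ψbar = h⁻¹ • ∫ t in (0 : ℝ)..h, ψ t) :
    (∫ t in (0 : ℝ)..h, ‖ψ t - ψbar‖ ^ 2) ≤ L ^ 2 / 12 * h ^ 3 := by
  have hL : 0 ≤ L := by
    have := (norm_nonneg _).trans (hlip h ⟨hh.le, le_rfl⟩ 0 ⟨le_rfl, hh.le⟩)
    rw [sub_zero, abs_of_pos hh] at this
    exact nonneg_of_mul_nonneg_left this hh
  have hψ : LipschitzOnWith L.toNNReal ψ (Set.Icc 0 h) :=
    LipschitzOnWith.of_dist_le_mul fun t ht s hs => by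
      simpa [dist_eq_norm, Real.dist_eq, hL] using hlip t ht s hs
  have hcont : ContinuousOn ψ (Set.uIcc 0 h) := Set.uIcc_of_le hh.le ▸ hψ.continuousOn
  calc (∫ t in (0 : ℝ)..h, ‖ψ t - ψbar‖ ^ 2)
      = ∫ t in (0 : ℝ)..h, ‖ψ t - (h - 0)⁻¹ • ∫ s in (0 : ℝ)..h, ψ s‖ ^ 2 := by
        rw [hψbar, sub_zero]
    _ ≤ ∫ t in (0 : ℝ)..h, ‖ψ t - ψ ((0 + h) / 2)‖ ^ 2 :=
        integral_norm_sub_average_sq_le hh.le hcont _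
    _ ≤ L.toNNReal ^ 2 * ((h - 0) ^ 3 / 12) := hψ.integral_norm_sub_midpoint_sq_le hh.le
    _ = L ^ 2 / 12 * h ^ 3 := by rw [Real.coe_toNNReal _ hL]; ring
end
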